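/- arXiv:math/0502306 — 2 statements merged into one kernel-verified Lean document; each statement's English description precedes it below -/
import Mathlib

section
/- For 0 < q < 1, w a root of unity, h ∈ ℤ, x > 0 real, and m, f positive integers, the twisted q-Bernoulli polynomial β^{(h)}_{m,w}(x,q) := (1/(1-q)^{m-1}) ∑_{k=0}^m binom(m,k) q^{xk} (-1)^k (k+h)/(1 - q^{h+k} w) satisfies the distribution relation β^{(h)}_{m,w}(x,q) = [f]_q^{m-1} ∑_{a=0}^{f-1} w^a q^{ha} β^{(h)}_{m,w^f}((a+x)/f, q^f). -/
open Finset

/-- The twisted q-Bernoulli polynomial, formula (13). -/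
noncomputable def betaFin (h : ℤ) (m : ℕ) (w : ℂ) (x q : ℝ) : ℂ :=
  (1 / (1 - (q : ℂ)) ^ (m - 1)) * ∑ k ∈ Finset.range (m + 1),
    (m.choose k : ℂ) * (Real.exp (x * k * Real.log q) : ℂ) * (-1) ^ k * ((k : ℂ) + (h : ℂ)) /
      (1 - (q : ℂ) ^ (h + (k : ℤ)) * w)

/-- Distribution relation for the twisted q-Bernoulli polynomials. -/
theorem stmt_1 (q : ℝ) (hq : 0 < q ∧ q < 1) (w : ℂ) (hw : ∃ k : ℕ, 0 < k ∧ w ^ k = 1)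
    (h : ℤ) (m f : ℕ) (hm : 1 ≤ m) (hf : 1 ≤ f) (x : ℝ) (hx : 0 < x)
    (hden : ∀ k : ℕ, k ≤ m →
      (q : ℂ) ^ (h + (k : ℤ)) * w ≠ 1 ∧ ((q : ℂ) ^ f) ^ (h + (k : ℤ)) * w ^ f ≠ 1) :
    betaFin h m w x q
      = (((1 - q ^ f) / (1 - q) : ℝ) : ℂ) ^ (m - 1) *
          ∑ a ∈ Finset.range f, w ^ a * (q : ℂ) ^ (h * (a : ℤ)) *
            betaFin h m (w ^ f) (((a : ℝ) + x) / f) (q ^ f) := by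
  obtain ⟨hq0, hq1⟩ := hq
  have hqC : (q : ℂ) ≠ 0 := by exact_mod_cast hq0.ne'
  have hfR : (f : ℝ) ≠ 0 := Nat.cast_ne_zero.mpr (by omega)
  have hqfR : q ^ f < 1 := pow_lt_one₀ hq0.le hq1 (by omega)
  have h1q : (1 : ℂ) - (q : ℂ) ≠ 0 := by
    rw [sub_ne_zero]
    exact_mod_cast hq1.ne'
  have h1qf : (1 : ℂ) - (q : ℂ) ^ f ≠ 0 := by
    rw [sub_ne_zero]
    exact_mod_cast hqfR.ne'
  set A : ℕ → ℂ := fun k =>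
    (m.choose k : ℂ) * (Real.exp (x * k * Real.log q) : ℂ) * (-1) ^ k * ((k : ℂ) + (h : ℂ))
    with hA
  set z : ℕ → ℂ := fun k => (q : ℂ) ^ (h + (k : ℤ)) * w with hz
  -- z k ^ f in the form appearing in hden
  have hzf : ∀ k : ℕ, z k ^ f = ((q : ℂ) ^ f) ^ (h + (k : ℤ)) * w ^ f := by
    intro k
    simp only [hz, mul_pow]
    congr 1
    rw [← zpow_natCast (q : ℂ) f, ← zpow_natCast ((q : ℂ) ^ (h + (k : ℤ))) f, ← zpow_mul,
      ← zpow_mul, mul_comm]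
  -- z k ^ a expanded
  have hza : ∀ a k : ℕ, z k ^ a = (q : ℂ) ^ (h * (a : ℤ)) * (q : ℂ) ^ (a * k) * w ^ a := by
    intro a k
    simp only [hz, mul_pow]
    congr 1
    rw [← zpow_natCast ((q : ℂ) ^ (h + (k : ℤ))) a, ← zpow_mul, ← zpow_natCast (q : ℂ) (a * k),
      ← zpow_add₀ hqC]
    congr 1
    push_cast
    ring
  -- LHS rewritten
  have lhs_eq : betaFin h m w x q = (1 / (1 - (q : ℂ)) ^ (m - 1)) *
      ∑ k ∈ Finset.range (m + 1),
        A k * ((∑ a ∈ Finset.range f, z k ^ a) / (1 - z k ^ f)) := by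
    unfold betaFin
    congr 1
    refine Finset.sum_congr rfl fun k hk => ?_
    have hk' : k ≤ m := by simpa using Nat.lt_succ_iff.mp (Finset.mem_range.mp hk)
    have h1 : (1 : ℂ) - z k ≠ 0 := sub_ne_zero.mpr (Ne.symm (hden k hk').1)
    have h2 : (1 : ℂ) - z k ^ f ≠ 0 := by
      rw [hzf k]
      exact sub_ne_zero.mpr (Ne.symm (hden k hk').2)
    have geom : (1 : ℂ) - z k ^ f = (∑ a ∈ Finset.range f, z k ^ a) * (1 - z k) := by
      have := geom_sum_mul (z k) f
      linear_combination this
    have hS : (∑ a ∈ Finset.range f, z k ^ a) ≠ 0 := by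
      intro h0
      exact h2 (by rw [geom, h0, zero_mul])
    have key : (∑ a ∈ Finset.range f, z k ^ a) / (1 - z k ^ f) = 1 / (1 - z k) := by
      rw [geom, ← div_div, div_self hS]
    show A k / (1 - z k) = A k * ((∑ a ∈ Finset.range f, z k ^ a) / (1 - z k ^ f))
    rw [key, mul_one_div]
  -- the exponential factor
  have hexp : ∀ a k : ℕ, Real.exp (((a : ℝ) + x) / f * k * Real.log (q ^ f))
      = q ^ (a * k) * Real.exp (x * k * Real.log q) := by
    intro a k
    rw [Real.log_pow]
    have he : ((a : ℝ) + x) / f * k * ((f : ℕ) * Real.log q)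
        = ((a * k : ℕ) : ℝ) * Real.log q + x * k * Real.log q := by
      push_cast
      field_simp
    rw [he, Real.exp_add, Real.exp_nat_mul, Real.exp_log hq0]
  -- RHS inner sum rewritten
  have rhs_eq : ∑ a ∈ Finset.range f, w ^ a * (q : ℂ) ^ (h * (a : ℤ)) *
        betaFin h m (w ^ f) (((a : ℝ) + x) / f) (q ^ f)
      = (1 / (1 - (q : ℂ) ^ f) ^ (m - 1)) * ∑ k ∈ Finset.range (m + 1),
          A k * ((∑ a ∈ Finset.range f, z k ^ a) / (1 - z k ^ f)) := by
    unfold betaFin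
    simp only [hexp]
    push_cast
    simp only [Finset.sum_div, Finset.mul_sum]
    rw [Finset.sum_comm]
    refine Finset.sum_congr rfl fun k hk => ?_
    refine Finset.sum_congr rfl fun a ha => ?_
    rw [← hzf k, hza a k, hA]
    push_cast
    ring
  rw [lhs_eq, rhs_eq, ← mul_assoc]
  congr 1
  have hcast : (((1 - q ^ f) / (1 - q) : ℝ) : ℂ) = (1 - (q : ℂ) ^ f) / (1 - (q : ℂ)) := by
    push_cast
    ring
  have hp1 : (1 - (q : ℂ)) ^ (m - 1) ≠ 0 := pow_ne_zero _ h1q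
  have hp2 : (1 - (q : ℂ) ^ f) ^ (m - 1) ≠ 0 := pow_ne_zero _ h1qf
  rw [hcast, div_pow]
  field_simp
end

section
/- For 0 < q < 1, w a root of unity, h a positive integer, and m ≥ 1, the value β^{(h)}_{m,w}(q) given by the series formula (14) tends, as q → 1⁻ along real values, to the twisted Bernoulli number B_{m,w} defined by t/(we^t-1) = ∑ B_{n,w} t^n/n!, provided w ≠ 1. -/
/-!
Put `q = e^z` with `z → 0`. Since `F t = t / (w e^t - 1) = ∑ B_n t^n / n!`, the `k`-th summand is
`-(1/z) F((h+k) z)`, so the sum equals `-(1/z) ∑_n c_n B_n z^n / n!` with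
`c_n = ∑_k (m choose k) (-1)^k (h+k)^n = (-1)^m Δ^m[x^n](h)`. The `m`-th finite difference kills
`x^n` for `n < m` and sends `x^m` to `m!`, so the sum is `-z^(m-1) ((-1)^m B_m + O(z))`; the factor
`(1-q)^(1-m) = (z / (1 - e^z))^(m-1) z^(1-m)` with `z / (1 - e^z) → -1` then leaves `B_m`.
The condition `w ≠ 1` makes `F` nonvanishing near `0`, which forces the series to converge there.
-/

open Finset Filter Topology

section PowerSeries

variable {𝕜 : Type*} [NontriviallyNormedField 𝕜] {a : ℕ → 𝕜}

lemma norm_mul_pow_le_of_mem_closedBall {ρ : ℝ} {z : 𝕜} (hz : z ∈ Metric.closedBall 0 ρ)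
    (n : ℕ) : ‖a n * z ^ n‖ ≤ ‖a n‖ * ρ ^ n := by
  rw [norm_mul, norm_pow]
  gcongr
  simpa using hz

lemma summable_norm_mul_pow_of_summable_mul_pow {z : 𝕜} (ha : Summable fun n ↦ a n * z ^ n)
    {ρ : ℝ} (hρ₀ : 0 ≤ ρ) (hρ : ρ < ‖z‖) : Summable fun n ↦ ‖a n‖ * ρ ^ n := by
  obtain ⟨C, hC⟩ := ha.tendsto_atTop_zero.norm.bddAbove_range
  have hz : 0 < ‖z‖ := hρ₀.trans_lt hρ
  refine .of_nonneg_of_le (fun n ↦ by positivity) (fun n ↦ ?_)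
    ((summable_geometric_of_lt_one (by positivity) ((div_lt_one hz).2 hρ)).mul_left C)
  calc ‖a n‖ * ρ ^ n = ‖a n * z ^ n‖ * (ρ / ‖z‖) ^ n := by
        rw [norm_mul, norm_pow, div_pow]; field_simp
    _ ≤ C * (ρ / ‖z‖) ^ n := by gcongr; exact hC ⟨n, rfl⟩

lemma eventually_hasSum_sum_mul_comp_mul {ι : Type*} {f : 𝕜 → 𝕜}
    (hf : ∀ᶠ t in 𝓝 0, HasSum (fun n ↦ a n * t ^ n) (f t)) (s : Finset ι) (c μ : ι → 𝕜) :
    ∀ᶠ z in 𝓝 0, HasSum (fun n ↦ (∑ i ∈ s, c i * μ i ^ n) * a n * z ^ n)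
      (∑ i ∈ s, c i * f (μ i * z)) := by
  have hdil : ∀ i ∈ s, ∀ᶠ z in 𝓝 0,
      HasSum (fun n ↦ c i * (a n * (μ i * z) ^ n)) (c i * f (μ i * z)) := fun i _ ↦
    ((continuous_const_mul (μ i)).tendsto' 0 0 (mul_zero _) |>.eventually hf).mono
      fun z hz ↦ hz.mul_left (c i)
  filter_upwards [(eventually_all_finset s).2 hdil] with z hz
  refine (hasSum_sum hz).congr_fun fun n ↦ ?_
  rw [sum_mul, sum_mul]
  exact sum_congr rfl fun i _ ↦ by ring

variable [CompleteSpace 𝕜]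

lemma continuousAt_tsum_mul_pow {ρ : ℝ} (hρ : 0 < ρ) (ha : Summable fun n ↦ ‖a n‖ * ρ ^ n) :
    ContinuousAt (fun z ↦ ∑' n, a n * z ^ n) 0 :=
  (continuousOn_tsum (fun n ↦ by fun_prop) ha fun n _ hz ↦
    norm_mul_pow_le_of_mem_closedBall hz n).continuousAt (Metric.closedBall_mem_nhds 0 hρ)

lemma eventually_hasSum_mul_pow_of_eventually_eq_tsum {f : 𝕜 → 𝕜}
    (hf : ∀ᶠ t in 𝓝 0, f t = ∑' n, a n * t ^ n) (hf₀ : ∃ᶠ t in 𝓝[≠] 0, f t ≠ 0) :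
    ∀ᶠ t in 𝓝 0, HasSum (fun n ↦ a n * t ^ n) (f t) := by
  obtain ⟨t₀, hft₀, ht₀, ht₀0 : t₀ ≠ 0⟩ :=
    (hf₀.and_eventually ((eventually_nhdsWithin_of_eventually_nhds hf).and
      self_mem_nhdsWithin)).exists
  have hsum : Summable fun n ↦ a n * t₀ ^ n := by
    -- a non-summable `tsum` is `0`
    by_contra h
    exact hft₀ (ht₀.trans (tsum_eq_zero_of_not_summable h))
  have hρ := summable_norm_mul_pow_of_summable_mul_pow hsum (by positivity)
    (half_lt_self (norm_pos_iff.2 ht₀0))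
  filter_upwards [hf, Metric.closedBall_mem_nhds 0 (half_pos (norm_pos_iff.2 ht₀0))]
    with t ht htρ
  rw [ht]
  exact (Summable.of_norm_bounded hρ (norm_mul_pow_le_of_mem_closedBall htρ)).hasSum

lemma tendsto_div_pow_nhdsNE_of_hasSum {G : 𝕜 → 𝕜} {m : ℕ}
    (hG : ∀ᶠ z in 𝓝 0, HasSum (fun n ↦ a n * z ^ n) (G z)) (ha : ∀ n < m, a n = 0) :
    Tendsto (fun z ↦ G z / z ^ m) (𝓝[≠] 0) (𝓝 (a m)) := by
  have hG' := eventually_nhdsWithin_of_eventually_nhds (s := {0}ᶜ) hG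
  obtain ⟨z₀, hz₀, hz₀0 : z₀ ≠ 0⟩ := (hG'.and self_mem_nhdsWithin).exists
  have hρ : Summable fun n ↦ ‖a n‖ * (‖z₀‖ / 2) ^ n :=
    summable_norm_mul_pow_of_summable_mul_pow hz₀.summable (by positivity)
      (half_lt_self (norm_pos_iff.2 hz₀0))
  have htail : Summable fun n ↦ ‖a (n + m)‖ * (‖z₀‖ / 2) ^ n := by
    refine ((summable_nat_add_iff m).2 hρ).div_const ((‖z₀‖ / 2) ^ m) |>.congr fun n ↦ ?_
    rw [pow_add, mul_div_assoc, mul_div_cancel_right₀ _ (by positivity)]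
  have hcont := (continuousAt_tsum_mul_pow (by positivity) htail).tendsto
  have hval : ∑' n, a (n + m) * (0 : 𝕜) ^ n = a m := by
    rw [tsum_eq_single 0 fun n hn ↦ by simp [hn]]; simp
  rw [hval] at hcont
  refine (hcont.mono_left nhdsWithin_le_nhds).congr' ?_
  filter_upwards [hG', self_mem_nhdsWithin] with z hz (hz0 : z ≠ 0)
  have hhead : ∑ i ∈ range m, a i * z ^ i = 0 :=
    sum_eq_zero fun i hi ↦ by rw [ha i (mem_range.1 hi), zero_mul]
  have htail := ((hasSum_nat_add_iff' m).2 hz).div_const (z ^ m)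
  rw [hhead, sub_zero] at htail
  refine (htail.congr_fun fun n ↦ ?_).tsum_eq
  rw [pow_add, ← mul_assoc, mul_div_cancel_right₀ _ (pow_ne_zero m hz0)]

end PowerSeries

lemma sum_range_choose_mul_neg_one_pow_mul_add_pow {R : Type*} [CommRing R] (x : R) (m n : ℕ) :
    ∑ k ∈ range (m + 1), (m.choose k : R) * (-1) ^ k * (x + k) ^ n =
      (-1) ^ m * (fwdDiff 1)^[m] (fun r ↦ r ^ n) x := by
  rw [fwdDiff_iter_eq_sum_shift, mul_sum]
  refine sum_congr rfl fun k hk ↦ ?_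
  have hsign : (-1 : R) ^ m * (-1) ^ (m - k) = (-1) ^ k := by
    rw [← pow_add, show m + (m - k) = k + 2 * (m - k) by have := mem_range_succ_iff.1 hk; omega,
      pow_add, pow_mul, neg_one_sq, one_pow, mul_one]
  simp only [zsmul_eq_mul, nsmul_eq_mul, mul_one]
  push_cast
  linear_combination (m.choose k : R) * (x + k) ^ n * hsign.symm

lemma tendsto_div_one_sub_exp_nhdsNE_zero :
    Tendsto (fun z : ℂ ↦ z / (1 - Complex.exp z)) (𝓝[≠] 0) (𝓝 (-1)) := by
  have := (Complex.hasDerivAt_exp 0).tendsto_slope_zero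
  simp only [zero_add, Complex.exp_zero, smul_eq_mul] at this
  rw [show (-1 : ℂ) = -1⁻¹ by simp]
  refine (this.inv₀ one_ne_zero).neg.congr fun z ↦ ?_
  rw [mul_inv, inv_inv, ← neg_sub 1, inv_neg]
  ring

noncomputable def twistedBernoulliGenFun (w t : ℂ) : ℂ := t / (w * Complex.exp t - 1)

lemma frequently_twistedBernoulliGenFun_ne_zero {w : ℂ} (hw : w ≠ 1) :
    ∃ᶠ t in 𝓝[≠] 0, twistedBernoulliGenFun w t ≠ 0 := by
  have hden : ∀ᶠ t in 𝓝 0, w * Complex.exp t - 1 ≠ 0 :=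
    (by fun_prop : Continuous fun t ↦ w * Complex.exp t - 1).continuousAt.eventually_ne
      (by simpa [sub_eq_zero] using hw)
  refine ((eventually_nhdsWithin_of_eventually_nhds (s := {0}ᶜ) hden).and
    self_mem_nhdsWithin).frequently.mono fun t ⟨ht, (ht0 : t ≠ 0)⟩ ↦ div_ne_zero ht0 ht

noncomputable def twistedQBernoulli (w : ℂ) (h m : ℕ) (q : ℂ) : ℂ :=
  (1 / (1 - q) ^ (m - 1)) *
    ∑ k ∈ range (m + 1), (m.choose k : ℂ) * (-1) ^ k * ((k : ℂ) + (h : ℂ)) / (1 - q ^ (h + k) * w)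

lemma twistedQBernoulli_exp (w : ℂ) (h : ℕ) {m : ℕ} (hm : 1 ≤ m) {z : ℂ} (hz : z ≠ 0) :
    twistedQBernoulli w h m (Complex.exp z) =
      -(z / (1 - Complex.exp z)) ^ (m - 1) *
        ((∑ k ∈ range (m + 1), (m.choose k : ℂ) * (-1) ^ k *
          twistedBernoulliGenFun w (((h : ℂ) + k) * z)) / z ^ m) := by
  set S := ∑ k ∈ range (m + 1), (m.choose k : ℂ) * (-1) ^ k *
    twistedBernoulliGenFun w (((h : ℂ) + k) * z)
  have hsum : ∑ k ∈ range (m + 1), (m.choose k : ℂ) * (-1) ^ k * ((k : ℂ) + h) /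
      (1 - Complex.exp z ^ (h + k) * w) = -S / z := by
    rw [neg_div, sum_div, ← sum_neg_distrib]
    refine sum_congr rfl fun k _ ↦ ?_
    rw [twistedBernoulliGenFun, ← Complex.exp_nat_mul, ← neg_sub, div_neg, mul_div_right_comm _ z]
    push_cast
    field_simp
    ring
  rw [twistedQBernoulli, hsum]
  clear_value S
  obtain ⟨n, rfl⟩ := Nat.exists_eq_add_of_le' hm
  rw [Nat.add_sub_cancel, pow_succ, div_pow]
  field_simp

lemma tendsto_twistedQBernoulli_exp {w : ℂ} (hw : w ≠ 1) (h : ℕ) {m : ℕ} (hm : 1 ≤ m)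
    {B : ℕ → ℂ} (hB : ∀ᶠ t in 𝓝 0, twistedBernoulliGenFun w t = ∑' n, B n * t ^ n / n.factorial) :
    Tendsto (fun z ↦ twistedQBernoulli w h m (Complex.exp z)) (𝓝[≠] 0) (𝓝 (B m)) := by
  have hgen : ∀ᶠ t in 𝓝 0,
      HasSum (fun n ↦ B n / n.factorial * t ^ n) (twistedBernoulliGenFun w t) :=
    eventually_hasSum_mul_pow_of_eventually_eq_tsum
      (hB.mono fun t ht ↦ by simp_rw [ht, mul_div_right_comm])
      (frequently_twistedBernoulliGenFun_ne_zero hw)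
  have hcoeff (n : ℕ) : ∑ k ∈ range (m + 1), (m.choose k : ℂ) * (-1) ^ k * ((h : ℂ) + k) ^ n =
      (-1) ^ m * (fwdDiff 1)^[m] (fun r ↦ r ^ n) (h : ℂ) :=
    sum_range_choose_mul_neg_one_pow_mul_add_pow _ m n
  have hlim := tendsto_div_pow_nhdsNE_of_hasSum
    (eventually_hasSum_sum_mul_comp_mul hgen (range (m + 1)) (fun k ↦ (m.choose k : ℂ) * (-1) ^ k)
      (fun k ↦ (h : ℂ) + k)) (m := m)
    fun n hn ↦ by rw [hcoeff, fwdDiff_iter_pow_eq_zero_of_lt hn]; simp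
  rw [hcoeff, fwdDiff_iter_eq_factorial] at hlim
  have hval : -(-1 : ℂ) ^ (m - 1) * ((-1) ^ m * (m.factorial : ℂ → ℂ) h * (B m / m.factorial)) =
      B m := by
    have hsign : -(-1 : ℂ) ^ (m - 1) * (-1) ^ m = 1 := by
      obtain ⟨n, rfl⟩ := Nat.exists_eq_add_of_le' hm
      rw [Nat.add_sub_cancel, pow_succ, mul_neg_one, neg_mul_neg, ← pow_add,
        Even.neg_one_pow ⟨n, rfl⟩]
    rw [Pi.natCast_apply, mul_assoc _ _ (B m / _),
      mul_div_cancel₀ _ (Nat.cast_ne_zero.2 m.factorial_ne_zero), ← mul_assoc, hsign, one_mul]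
  refine hval ▸ ((tendsto_div_one_sub_exp_nhdsNE_zero.pow (m - 1)).neg.mul hlim).congr' ?_
  filter_upwards [self_mem_nhdsWithin] with z (hz : z ≠ 0)
  exact (twistedQBernoulli_exp w h hm hz).symm

lemma tendsto_ofReal_log_nhdsWithin_Ioo_one :
    Tendsto (fun q : ℝ ↦ (Real.log q : ℂ)) (𝓝[Set.Ioo 0 1] 1) (𝓝[≠] 0) := by
  refine tendsto_nhdsWithin_iff.2 ⟨?_, ?_⟩
  · have := (Complex.continuous_ofReal.continuousAt.comp
      (Real.continuousAt_log one_ne_zero)).tendsto.mono_left (nhdsWithin_le_nhds (s := Set.Ioo 0 1))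
    simpa [Function.comp_def] using this
  · filter_upwards [self_mem_nhdsWithin] with q hq
    exact Complex.ofReal_ne_zero.2 (Real.log_neg hq.1 hq.2).ne

theorem stmt_12_general (w : ℂ) (hw1 : w ≠ 1)
    (h : ℕ) (m : ℕ) (hm : 1 ≤ m)
    (B : ℕ → ℂ)
    (hB : ∀ᶠ t in nhds (0 : ℂ),
      t / (w * Complex.exp t - 1) = ∑' n : ℕ, B n * t ^ n / (n.factorial : ℂ)) :
    Filter.Tendsto (fun q : ℝ =>
        (1 / (1 - (q : ℂ)) ^ (m - 1)) *
          ∑ k ∈ range (m + 1), (m.choose k : ℂ) * (-1) ^ k * ((k : ℂ) + (h : ℂ)) /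
            (1 - (q : ℂ) ^ (h + k) * w))
      (nhdsWithin 1 (Set.Ioo 0 1)) (nhds (B m)) := by
  refine ((tendsto_twistedQBernoulli_exp hw1 h hm hB).comp
    tendsto_ofReal_log_nhdsWithin_Ioo_one).congr' ?_
  filter_upwards [self_mem_nhdsWithin] with q hq
  rw [Function.comp_apply, ← Complex.ofReal_exp, Real.exp_log hq.1, twistedQBernoulli]

/-- As q → 1⁻, the twisted q-Bernoulli number β^{(h)}_{m,w}(q) (formula (13)
with x = 0) tends to the twisted Bernoulli number B_{m,w}. -/
theorem stmt_12 (w : ℂ) (hw : ∃ k : ℕ, 0 < k ∧ w ^ k = 1) (hw1 : w ≠ 1)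
    (h : ℕ) (hh : 1 ≤ h) (m : ℕ) (hm : 1 ≤ m)
    (B : ℕ → ℂ)
    (hB : ∀ᶠ t in nhds (0 : ℂ),
      t / (w * Complex.exp t - 1) = ∑' n : ℕ, B n * t ^ n / (n.factorial : ℂ)) :
    Filter.Tendsto (fun q : ℝ =>
        (1 / (1 - (q : ℂ)) ^ (m - 1)) *
          ∑ k ∈ range (m + 1), (m.choose k : ℂ) * (-1) ^ k * ((k : ℂ) + (h : ℂ)) /
            (1 - (q : ℂ) ^ (h + k) * w))
      (nhdsWithin 1 (Set.Ioo 0 1)) (nhds (B m)) :=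
  stmt_12_general w hw1 h m hm B hB
end
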